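/- arXiv:1306.6740 — 4 statements merged into one kernel-verified Lean document; each statement's English description precedes it below -/
import Mathlib

section
/- Let X be a Banach space and 0 < ε < 1/2. Given x ∈ B_X and x* ∈ S_{X*} with |1 - x*(x)| < ε²/2, there exist y ∈ S_X and y* ∈ S_{X*} such that y*(y) = 1, ‖y - x‖ < ε + ε², and ‖y* - x*‖ < ε. -/
/-!
Ekeland's variational principle, applied to `f` on the unit ball with slope
`β = ε / (2 * (1 + ε))`, moves `x` to a point `y` with `f x + β * ‖y - x‖ ≤ f y` at which `f`
grows at most with slope `β`; since `f y - f x < ε ^ 2 / 2 = β * (ε + ε ^ 2)`, this gives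
`‖y - x‖ < ε + ε ^ 2`. A Hahn–Banach separation in `X × ℝ` converts the slope condition into a
functional `k` with `‖k‖ ≤ β` such that `f + k` attains its norm at `y`. Then `‖y‖ = 1`, and
`g = (f + k) / ‖f + k‖` satisfies `‖g - f‖ ≤ |1 - ‖f + k‖| + ‖k‖ ≤ 2 * β < ε`.
-/

open Set Filter Topology Metric

section Ekeland

variable {E : Type*} [MetricSpace E] (S : Set E) (φ : E → ℝ) (r : ℝ)

/-- The upper set of `w` in `S` for the Bishop–Phelps order. -/
def ekelandSet (w : E) : Set E := {z | z ∈ S ∧ φ w + r * dist z w ≤ φ z}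

variable {S φ r}

lemma mem_ekelandSet_self {w : E} (hw : w ∈ S) : w ∈ ekelandSet S φ r w := ⟨hw, by simp⟩

lemma ekelandSet_subset (hr : 0 ≤ r) {v w : E} (hw : w ∈ ekelandSet S φ r v) :
    ekelandSet S φ r w ⊆ ekelandSet S φ r v := by
  rintro z ⟨hzS, hz⟩
  have := mul_le_mul_of_nonneg_left (dist_triangle z w v) hr
  exact ⟨hzS, by linarith [hw.2]⟩

lemma isClosed_ekelandSet (hS : IsClosed S) (hφ : Continuous φ) (w : E) :
    IsClosed (ekelandSet S φ r w) :=
  hS.inter (isClosed_le (by fun_prop) hφ)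

lemma exists_mem_ekelandSet_forall_dist_le (hbdd : BddAbove (φ '' S)) (hr : 0 < r) {w : E}
    (hw : w ∈ S) {δ : ℝ} (hδ : 0 < δ) :
    ∃ z ∈ ekelandSet S φ r w, ∀ u ∈ ekelandSet S φ r z, dist u z ≤ δ := by
  have hne : (φ '' ekelandSet S φ r w).Nonempty := ⟨_, _, mem_ekelandSet_self hw, rfl⟩
  have hbdd' : BddAbove (φ '' ekelandSet S φ r w) := hbdd.mono (image_mono fun z hz => hz.1)
  obtain ⟨_, ⟨z, hz, rfl⟩, hlt⟩ := exists_lt_of_lt_csSup hne (sub_lt_self _ (mul_pos hr hδ))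
  refine ⟨z, hz, fun u hu => le_of_mul_le_mul_left ?_ hr⟩
  have := le_csSup hbdd' ⟨u, ekelandSet_subset hr.le hz hu, rfl⟩
  linarith [hu.2]

theorem exists_mem_ekelandSet_forall_le_add_mul_dist [CompleteSpace E] (hS : IsClosed S)
    (hφ : Continuous φ) (hbdd : BddAbove (φ '' S)) (hr : 0 < r) {x : E} (hx : x ∈ S) :
    ∃ y ∈ ekelandSet S φ r x, ∀ z ∈ S, φ z ≤ φ y + r * dist z y := by
  choose! F hF hF_dist using fun (n : ℕ) w (hw : w ∈ S) =>
    exists_mem_ekelandSet_forall_dist_le hbdd hr hw (pow_pos (one_half_pos (α := ℝ)) n)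
  let z : ℕ → E := fun n => Nat.rec (F 0 x) (fun n w => F (n + 1) w) n
  have hz_mem_S : ∀ n, z n ∈ S := by
    intro n
    induction n with
    | zero => exact (hF 0 x hx).1
    | succ n ih => exact (hF (n + 1) (z n) ih).1
  have hz_dist : ∀ n, ∀ u ∈ ekelandSet S φ r (z n), dist u (z n) ≤ (1 / 2) ^ n := by
    intro n
    cases n with
    | zero => exact hF_dist 0 x hx
    | succ n => exact hF_dist (n + 1) (z n) (hz_mem_S n)
  have hz_anti : Antitone fun n => ekelandSet S φ r (z n) :=
    antitone_nat_of_succ_le fun n => ekelandSet_subset hr.le (hF (n + 1) (z n) (hz_mem_S n))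
  have hz_mem : ∀ m n, m ≤ n → z n ∈ ekelandSet S φ r (z m) :=
    fun m n hmn => hz_anti hmn (mem_ekelandSet_self (hz_mem_S n))
  have h_geom : Tendsto (fun n : ℕ => (1 / 2 : ℝ) ^ n) atTop (𝓝 0) :=
    tendsto_pow_atTop_nhds_zero_of_lt_one (by norm_num) (by norm_num)
  obtain ⟨y, hy⟩ := cauchySeq_tendsto_of_complete <| cauchySeq_of_le_tendsto_0' _
    (fun m n hmn => (dist_comm _ _).trans_le (hz_dist m _ (hz_mem m n hmn))) h_geom
  have hy_mem : ∀ n, y ∈ ekelandSet S φ r (z n) := fun n =>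
    (isClosed_ekelandSet hS hφ _).mem_of_tendsto hy (eventually_atTop.2 ⟨n, hz_mem n⟩)
  have hy_unique : ∀ u ∈ ekelandSet S φ r y, u = y := by
    intro u hu
    refine tendsto_nhds_unique (tendsto_iff_dist_tendsto_zero.2 ?_) hy
    refine squeeze_zero (fun _ => dist_nonneg) (fun n => ?_) h_geom
    rw [dist_comm]
    exact hz_dist n u (ekelandSet_subset hr.le (hy_mem n) hu)
  refine ⟨y, ekelandSet_subset hr.le (hF 0 x hx) (hy_mem 0), fun u hu => ?_⟩
  by_contra! hlt
  obtain rfl := hy_unique u ⟨hu, hlt.le⟩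
  simp at hlt

end Ekeland

theorem exists_norm_le_isMaxOn_add {X : Type*} [NormedAddCommGroup X] [NormedSpace ℝ X]
    {S : Set X} (hS : Convex ℝ S) {f : X →L[ℝ] ℝ} {β : ℝ} (hβ : 0 ≤ β) {y : X} (hy : y ∈ S)
    (hf : ∀ z ∈ S, f z ≤ f y + β * ‖z - y‖) :
    ∃ h : X →L[ℝ] ℝ, ‖h‖ ≤ β ∧ IsMaxOn (f + h) S y := by
  -- Separate the open cone `{β * ‖u‖ < t}` from the graph of `f` over `S - y` in `X × ℝ`.
  let U : Set (X × ℝ) := {p | p.1 ∈ univ ∧ β * ‖p.1‖ < p.2}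
  let V : Set (X × ℝ) := (fun z => (z, f z)) '' ((fun z => -y + z) '' S)
  have hU : Convex ℝ U := ((convexOn_norm convex_univ).smul hβ).convex_strict_epigraph
  have hV : Convex ℝ V := (hS.translate (-y)).linear_image (LinearMap.id.prod f.toLinearMap)
  have hUV : Disjoint U V := by
    rw [Set.disjoint_left]
    rintro _ ⟨-, hlt⟩ ⟨_, ⟨z, hz, rfl⟩, rfl⟩
    have := hf z hz
    dsimp only at hlt
    rw [neg_add_eq_sub, map_sub] at hlt
    linarith
  have hU_open : IsOpen U := by
    simpa [U] using isOpen_lt (continuous_const.mul continuous_fst.norm) continuous_snd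
  obtain ⟨ℓ, s, hℓU, hℓV⟩ := geometric_hahn_banach_open hU hU_open hV hUV
  let a : X →L[ℝ] ℝ := ℓ.comp (.inl ℝ X ℝ)
  let c : ℝ := ℓ (0, 1)
  have hℓ : ∀ u t, ℓ (u, t) = a u + t * c := by
    intro u t
    have : ((u, t) : X × ℝ) = (u, 0) + t • (0, 1) := by ext <;> simp
    rw [this, map_add, map_smul, smul_eq_mul]
    rfl
  have hs_nonpos : s ≤ 0 := by simpa [hℓ] using hℓV (0, 0) ⟨0, ⟨y, hy, by simp⟩, by simp⟩
  have hc : c < 0 := by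
    have := hℓU (0, 1) ⟨trivial, by simp⟩
    simp only [hℓ, map_zero, one_mul, zero_add] at this
    linarith
  have hs_nonneg : 0 ≤ s := by
    by_contra! hs_neg
    have := hℓU (0, s / c) ⟨trivial, by simpa using div_pos_of_neg_of_neg hs_neg hc⟩
    rw [hℓ, map_zero, zero_add, div_mul_cancel₀ _ hc.ne] at this
    exact this.false
  have ha : ∀ u, a u ≤ -c * (β * ‖u‖) := by
    intro u
    by_contra! hau
    have := hℓU (u, a u / -c) ⟨trivial, by rwa [lt_div_iff₀ (neg_pos.2 hc), mul_comm]⟩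
    rw [hℓ, show a u / -c * c = -a u by field_simp [hc.ne]] at this
    linarith
  refine ⟨c⁻¹ • a, ?_, fun z hz => ?_⟩
  · refine ContinuousLinearMap.opNorm_le_bound _ hβ fun u => ?_
    have h₁ := ha u
    have h₂ := ha (-u)
    rw [map_neg, norm_neg] at h₂
    simp only [FunLike.coe_smul, Pi.smul_apply, smul_eq_mul, inv_mul_eq_div,
      Real.norm_eq_abs, abs_le, le_div_iff_of_neg hc, div_le_iff_of_neg hc]
    constructor <;> linarith
  · have hV_z := hℓV _ ⟨_, ⟨z, hz, rfl⟩, rfl⟩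
    simp only [hℓ, map_add, map_neg] at hV_z
    have : (a z - a y) / c ≤ f y - f z := (div_le_iff_of_neg hc).2 (by linarith)
    show (f + c⁻¹ • a) z ≤ (f + c⁻¹ • a) y
    simp only [add_apply, FunLike.coe_smul, Pi.smul_apply, smul_eq_mul,
      inv_mul_eq_div]
    linarith [sub_div (a z) (a y) c]

lemma ContinuousLinearMap.apply_le_norm_of_norm_le_one {X : Type*} [NormedAddCommGroup X]
    [NormedSpace ℝ X] (g : X →L[ℝ] ℝ) {u : X} (hu : ‖u‖ ≤ 1) : g u ≤ ‖g‖ :=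
  (le_abs_self _).trans ((g.le_opNorm_of_le hu).trans_eq (mul_one _))

lemma ContinuousLinearMap.norm_eq_apply_of_isMaxOn_closedBall {X : Type*} [NormedAddCommGroup X]
    [NormedSpace ℝ X] {g : X →L[ℝ] ℝ} {y : X} (hy : y ∈ closedBall (0 : X) 1)
    (hmax : IsMaxOn g (closedBall 0 1) y) : ‖g‖ = g y := by
  have hmax' : ∀ u : X, ‖u‖ ≤ 1 → g u ≤ g y := fun u hu => hmax (mem_closedBall_zero_iff.2 hu)
  refine le_antisymm (g.opNorm_le_of_unit_norm (by simpa using hmax' 0 (by simp))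
    fun u hu => abs_le.2 ⟨?_, hmax' u hu.le⟩) ?_
  · have := hmax' (-u) (by simp [hu])
    rw [map_neg] at this
    linarith
  · exact g.apply_le_norm_of_norm_le_one (mem_closedBall_zero_iff.1 hy)

lemma norm_inv_norm_smul_sub_self {E : Type*} [NormedAddCommGroup E] [NormedSpace ℝ E] {v : E}
    (hv : v ≠ 0) : ‖‖v‖⁻¹ • v - v‖ = |1 - ‖v‖| := by
  have hv' : 0 < ‖v‖ := norm_pos_iff.2 hv
  calc ‖‖v‖⁻¹ • v - v‖ = |‖v‖⁻¹ - 1| * ‖v‖ := by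
        rw [← Real.norm_eq_abs, ← norm_smul, sub_smul, one_smul]
    _ = |(‖v‖⁻¹ - 1) * ‖v‖| := by rw [abs_mul, abs_of_pos hv']
    _ = |1 - ‖v‖| := by rw [sub_one_mul, inv_mul_cancel₀ hv'.ne', abs_sub_comm]

lemma exists_norm_eq_one_apply_eq_one_of_isMaxOn_add {X : Type*} [NormedAddCommGroup X]
    [NormedSpace ℝ X] {f k : X →L[ℝ] ℝ} (hf : ‖f‖ = 1) {β : ℝ} (hk : ‖k‖ ≤ β) (hβ : β < 1)
    {y : X} (hy : y ∈ closedBall (0 : X) 1) (hmax : IsMaxOn (f + k) (closedBall 0 1) y) :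
    ‖y‖ = 1 ∧ ∃ g : X →L[ℝ] ℝ, ‖g‖ = 1 ∧ g y = 1 ∧ ‖g - f‖ ≤ 2 * β := by
  have hfk_norm := ContinuousLinearMap.norm_eq_apply_of_isMaxOn_closedBall hy hmax
  have hfk_near : |‖f + k‖ - 1| ≤ β := by
    simpa [hf] using (abs_norm_sub_norm_le (f + k) f).trans (by simpa using hk)
  have hfk_pos : 0 < ‖f + k‖ := by linarith [abs_le.1 hfk_near]
  have hfk_ne : f + k ≠ 0 := norm_pos_iff.1 hfk_pos
  refine ⟨le_antisymm (mem_closedBall_zero_iff.1 hy) ?_, ‖f + k‖⁻¹ • (f + k),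
    norm_smul_inv_norm hfk_ne, ?_, ?_⟩
  · have := (le_abs_self _).trans ((f + k).le_opNorm y)
    rw [← hfk_norm] at this
    exact (le_mul_iff_one_le_right hfk_pos).1 this
  · rw [smul_apply, smul_eq_mul, ← hfk_norm, inv_mul_cancel₀ hfk_pos.ne']
  · calc ‖‖f + k‖⁻¹ • (f + k) - f‖ = ‖(‖f + k‖⁻¹ • (f + k) - (f + k)) + k‖ := by
          rw [sub_add, add_sub_cancel_right]
      _ ≤ |1 - ‖f + k‖| + ‖k‖ := by
        rw [← norm_inv_norm_smul_sub_self hfk_ne]; exact norm_add_le _ _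
      _ ≤ 2 * β := by linarith [abs_sub_comm 1 ‖f + k‖]

theorem stmt0_general (X : Type*) [NormedAddCommGroup X] [NormedSpace ℝ X] [CompleteSpace X]
    (ε : ℝ) (hε : 0 < ε)
    (x : X) (hx : ‖x‖ ≤ 1) (f : X →L[ℝ] ℝ) (hf : ‖f‖ = 1)
    (h : |1 - f x| < ε ^ 2 / 2) :
    ∃ (y : X) (g : X →L[ℝ] ℝ), ‖y‖ = 1 ∧ ‖g‖ = 1 ∧ g y = 1 ∧
      ‖y - x‖ < ε + ε ^ 2 ∧ ‖g - f‖ < ε := by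
  set β := ε / (2 * (1 + ε)) with hβ_def
  have hβ : 0 < β := by positivity
  have hβ_lt : β < ε / 2 := by
    rw [div_lt_div_iff_of_pos_left hε (by positivity) two_pos]; linarith
  have hβ_lt_one : β < 1 := by
    rw [div_lt_one (by positivity)]; linarith
  have hf_le : ∀ z ∈ closedBall (0 : X) 1, f z ≤ 1 := fun z hz =>
    hf ▸ f.apply_le_norm_of_norm_le_one (mem_closedBall_zero_iff.1 hz)
  obtain ⟨y, ⟨hy, hxy⟩, hmax⟩ := exists_mem_ekelandSet_forall_le_add_mul_dist isClosed_closedBall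
    f.continuous ⟨1, forall_mem_image.2 hf_le⟩ hβ (mem_closedBall_zero_iff.2 hx)
  obtain ⟨k, hk, hk_max⟩ := exists_norm_le_isMaxOn_add (convex_closedBall 0 1) hβ.le hy
    (by simpa only [dist_eq_norm] using hmax)
  obtain ⟨hy_norm, g, hg_norm, hgy, hgf⟩ :=
    exists_norm_eq_one_apply_eq_one_of_isMaxOn_add hf hk hβ_lt_one hy hk_max
  refine ⟨y, g, hy_norm, hg_norm, hgy, ?_, by linarith⟩
  have hβε : β * (ε + ε ^ 2) = ε ^ 2 / 2 := by rw [hβ_def]; field_simp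
  refine lt_of_mul_lt_mul_left ?_ hβ.le
  rw [hβε, ← dist_eq_norm]
  linarith [hf_le y hy, (abs_lt.1 h).2]

/-- Bishop-Phelps-Bollobás theorem. -/
theorem stmt0 (X : Type*) [NormedAddCommGroup X] [NormedSpace ℝ X] [CompleteSpace X]
    (ε : ℝ) (hε : 0 < ε) (hε2 : ε < 1 / 2)
    (x : X) (hx : ‖x‖ ≤ 1) (f : X →L[ℝ] ℝ) (hf : ‖f‖ = 1)
    (h : |1 - f x| < ε ^ 2 / 2) :
    ∃ (y : X) (g : X →L[ℝ] ℝ), ‖y‖ = 1 ∧ ‖g‖ = 1 ∧ g y = 1 ∧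
      ‖y - x‖ < ε + ε ^ 2 ∧ ‖g - f‖ < ε :=
  stmt0_general X ε hε x hx f hf h
end

section
/- Let K be a compact Hausdorff space, f₀ ∈ C(K) with ‖f₀‖ = 1, and 0 < a < 1. Let W_a = {t ∈ K : |f₀(t)| > a}, and let u ∈ C(K) with 0 ≤ u ≤ 1 and supp(u) ⊂ W_a. Define h₀(t) = (f₀(t)/|f₀(t)|)·u(t) + (1 − u(t))·f₀(t) when f₀(t) ≠ 0 and h₀(t) = 0 otherwise. Then h₀ is continuous, ‖h₀‖ ≤ 1, and ‖h₀ − f₀‖ ≤ 1 − a. -/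
/-- Properties of the function `h₀` built from `f₀` and the Urysohn function `u`. -/
theorem stmt4 (K : Type*) [TopologicalSpace K] [CompactSpace K] [T2Space K]
    (f₀ : C(K, ℝ)) (hf₀ : ‖f₀‖ = 1) (a : ℝ) (ha : 0 < a) (ha1 : a < 1)
    (u : C(K, ℝ)) (hu : ∀ t, 0 ≤ u t ∧ u t ≤ 1)
    (hsupp : tsupport ⇑u ⊆ {t | a < |f₀ t|})
    (h₀ : K → ℝ)
    (hh₀ : ∀ t, h₀ t =
      if f₀ t ≠ 0 then f₀ t / |f₀ t| * u t + (1 - u t) * f₀ t else 0) :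
    Continuous h₀ ∧ (∀ t, |h₀ t| ≤ 1) ∧ ∀ t, |h₀ t - f₀ t| ≤ 1 - a := by
  have hb : ∀ t, |f₀ t| ≤ 1 := by
    intro t
    have := f₀.norm_coe_le_norm t
    rw [hf₀] at this
    simpa [Real.norm_eq_abs] using this
  have hu0 : ∀ t, t ∉ tsupport ⇑u → u t = 0 := fun t ht =>
    image_eq_zero_of_notMem_tsupport ht
  have hW : IsOpen {t | a < |f₀ t|} :=
    isOpen_lt continuous_const (continuous_abs.comp f₀.continuous)
  refine ⟨?_, ?_, ?_⟩
  · -- continuity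
    rw [continuous_iff_continuousAt]
    intro t
    by_cases htW : t ∈ {t | a < |f₀ t|}
    · have h1 : ContinuousOn h₀ {t | a < |f₀ t|} := by
        have hc : ContinuousOn (fun t => f₀ t / |f₀ t| * u t + (1 - u t) * f₀ t)
            {t | a < |f₀ t|} := by
          apply ContinuousOn.add
          · exact (f₀.continuous.continuousOn.div
              ((continuous_abs.comp f₀.continuous).continuousOn)
              (fun s hs => by
                simp only [Function.comp_apply]
                have : a < |f₀ s| := hs
                exact ne_of_gt (by linarith))).mul
              u.continuous.continuousOn
          · exact (continuousOn_const.sub u.continuous.continuousOn).mul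
              f₀.continuous.continuousOn
        refine hc.congr fun s hs => ?_
        rw [hh₀ s, if_pos]
        intro h
        have : a < |f₀ s| := hs
        rw [h] at this
        simp at this
        linarith
      exact h1.continuousAt (hW.mem_nhds htW)
    · have htC : t ∈ (tsupport ⇑u)ᶜ := fun h => htW (hsupp h)
      have h2 : ContinuousOn h₀ (tsupport ⇑u)ᶜ := by
        refine f₀.continuous.continuousOn.congr fun s hs => ?_
        rw [hh₀ s]
        split_ifs with h
        · rw [hu0 s hs]; ring
        · push_neg at h; rw [h]
      exact h2.continuousAt ((isClosed_tsupport _).isOpen_compl.mem_nhds htC)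
  · -- ‖h₀‖ ≤ 1
    intro t
    rw [hh₀ t]
    split_ifs with h
    · have hs0 : (0:ℝ) < |f₀ t| := abs_pos.mpr h
      have hsgn : abs (f₀ t / |f₀ t|) = 1 := by
        rw [abs_div, abs_abs, div_self hs0.ne']
      obtain ⟨hv0, hv1⟩ := hu t
      calc |f₀ t / |f₀ t| * u t + (1 - u t) * f₀ t|
          ≤ |f₀ t / |f₀ t| * u t| + |(1 - u t) * f₀ t| := abs_add_le _ _
        _ = u t + (1 - u t) * |f₀ t| := by
            rw [abs_mul, abs_mul, hsgn, one_mul, abs_of_nonneg hv0,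
              abs_of_nonneg (by linarith)]
        _ ≤ 1 := by nlinarith [hb t, abs_nonneg (f₀ t)]
    · simp
  · -- distance bound
    intro t
    rw [hh₀ t]
    split_ifs with h
    · have hs0 : (0:ℝ) < |f₀ t| := abs_pos.mpr h
      obtain ⟨hv0, hv1⟩ := hu t
      have key : f₀ t / |f₀ t| * u t + (1 - u t) * f₀ t - f₀ t
          = u t * (f₀ t / |f₀ t|) * (1 - |f₀ t|) := by
        field_simp
        ring
      rw [key, abs_mul, abs_mul, abs_div, abs_abs, div_self hs0.ne',
        abs_of_nonneg hv0, mul_one, abs_of_nonneg (by linarith [hb t])]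
      rcases eq_or_lt_of_le hv0 with hv | hv
      · rw [← hv]; simp; linarith
      · have ht : t ∈ tsupport ⇑u := subset_tsupport _ (by simpa using hv.ne')
        have : a < |f₀ t| := hsupp ht
        nlinarith
    · push_neg at h; rw [h]; simp; linarith
end

section
/- Let K be a compact Hausdorff space, μ₀ a regular Borel signed measure on K with total variation norm 1, and f₀ ∈ C(K) with ‖f₀‖ = 1 such that ∫_K f₀ dμ₀ > 1 − α for some α > 0. Let K⁺, K⁻ be a Hahn decomposition of K for μ₀, and for 0 < x < 1 set D_x = (K⁺ ∩ {f₀ > x}) ∪ (K⁻ ∩ {f₀ < −x}). Then |μ₀|(D_x) > 1 − α/(1 − x). -/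
/-!
Pointwise `f ≤ x + (1 - x) · 𝟙{x < f}` whenever `f ≤ 1`. Integrating this against the positive
part of `μ₀`, and the same bound for `-f₀` against the negative part, gives
`1 - α < ∫ f₀ dμ₀ ≤ x + (1 - x) (μ₀⁺{f₀ > x} + μ₀⁻{f₀ < -x})`. Since `μ₀⁺` lives on `K⁺` and
`μ₀⁻` on `K⁻`, the bracket is at most `|μ₀|(D_x)`.
-/

open MeasureTheory

/-- Integral of a function against a signed measure. -/
noncomputable def svint {K : Type*} [MeasurableSpace K]
    (ν : MeasureTheory.SignedMeasure K) (f : K → ℝ) : ℝ :=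
  (∫ t, f t ∂ν.toJordanDecomposition.posPart) -
    ∫ t, f t ∂ν.toJordanDecomposition.negPart

namespace MeasureTheory

variable {α : Type*} [MeasurableSpace α]

theorem integral_le_add_mul_measureReal_lt {μ : Measure α} [IsFiniteMeasure μ] {f : α → ℝ}
    (hfm : Measurable f) (hf : Integrable f μ) (hf1 : ∀ t, f t ≤ 1) (x : ℝ) :
    ∫ t, f t ∂μ ≤ x * μ.real Set.univ + (1 - x) * μ.real {t | x < f t} := by
  have hA : MeasurableSet {t | x < f t} := measurableSet_lt measurable_const hfm
  have hpt : ∀ t, f t ≤ x + (1 - x) * {t | x < f t}.indicator 1 t := by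
    intro t
    by_cases ht : x < f t
    · simp [ht, hf1 t]
    · simp [ht, not_lt.mp ht]
  have hind : Integrable ({t | x < f t}.indicator (1 : α → ℝ)) μ :=
    (integrable_const 1).indicator hA
  calc ∫ t, f t ∂μ ≤ ∫ t, x + (1 - x) * {t | x < f t}.indicator 1 t ∂μ :=
        integral_mono hf ((integrable_const x).add (hind.const_mul _)) hpt
    _ = x * μ.real Set.univ + (1 - x) * μ.real {t | x < f t} := by
        rw [integral_add (integrable_const x) (hind.const_mul _), integral_const,
          integral_const_mul, integral_indicator_one hA, smul_eq_mul, mul_comm]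

theorem measureReal_le_of_compl_null {μ : Measure α} [IsFiniteMeasure μ] {s t u : Set α}
    (hs : μ sᶜ = 0) (h : t ∩ s ⊆ u) : μ.real t ≤ μ.real u := by
  rw [measureReal_def, ← measure_inter_conull hs, ← measureReal_def]
  exact measureReal_mono h

namespace SignedMeasure

theorem posPart_apply_eq_zero_of_nonpos (s : SignedMeasure α) {N : Set α}
    (hN : MeasurableSet N) (h : ∀ A ⊆ N, MeasurableSet A → s A ≤ 0) :
    s.toJordanDecomposition.posPart N = 0 := by
  obtain ⟨i, hi, hsi, -, hpos, -⟩ := s.toJordanDecomposition_spec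
  have hiN : s (i ∩ N) = 0 := le_antisymm (h _ Set.inter_subset_right (hi.inter hN))
    (VectorMeasure.nonneg_of_zero_le_restrict _
      (VectorMeasure.restrict_le_restrict_subset _ _ hi hsi Set.inter_subset_left))
  rw [hpos, toMeasureOfZeroLE_apply _ hsi hi hN]
  simp [hiN]

theorem negPart_apply_eq_zero_of_nonneg (s : SignedMeasure α) {P : Set α}
    (hP : MeasurableSet P) (h : ∀ A ⊆ P, MeasurableSet A → 0 ≤ s A) :
    s.toJordanDecomposition.negPart P = 0 := by
  have := (-s).posPart_apply_eq_zero_of_nonpos hP fun A hA hAm => by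
    simpa using h A hA hAm
  rwa [toJordanDecomposition_neg, JordanDecomposition.neg_posPart] at this

theorem svint_le_add_mul (s : SignedMeasure α) {f : α → ℝ} (hfm : Measurable f)
    (hf : ∀ t, |f t| ≤ 1) (x : ℝ) :
    svint s f ≤ x * s.totalVariation.real Set.univ + (1 - x) *
      (s.toJordanDecomposition.posPart.real {t | x < f t} +
        s.toJordanDecomposition.negPart.real {t | f t < -x}) := by
  have hintegrable : ∀ μ : Measure α, [IsFiniteMeasure μ] → Integrable f μ := fun μ _ =>
    .of_bound hfm.aestronglyMeasurable 1 (.of_forall hf)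
  have hpos := integral_le_add_mul_measureReal_lt hfm (hintegrable _) (fun t => (abs_le.mp (hf t)).2) x
    (μ := s.toJordanDecomposition.posPart)
  have hneg := integral_le_add_mul_measureReal_lt hfm.neg (hintegrable _).neg
    (fun t => neg_le.mp (abs_le.mp (hf t)).1) x (μ := s.toJordanDecomposition.negPart)
  simp only [Pi.neg_apply, integral_neg, lt_neg] at hneg
  rw [svint, totalVariation, measureReal_add_apply]
  linarith

end SignedMeasure

end MeasureTheory

theorem stmt5_general (K : Type*) [TopologicalSpace K] [CompactSpace K]
    [MeasurableSpace K] [BorelSpace K]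
    (μ₀ : MeasureTheory.SignedMeasure K)
    (hnorm : μ₀.totalVariation Set.univ = 1)
    (f₀ : C(K, ℝ)) (hf₀ : ‖f₀‖ = 1)
    (α : ℝ) (hint : 1 - α < svint μ₀ ⇑f₀)
    (P N : Set K) (hPm : MeasurableSet P) (hNm : MeasurableSet N)
    (hPN : P ∪ N = Set.univ)
    (hP : ∀ A ⊆ P, MeasurableSet A → 0 ≤ μ₀ A)
    (hN : ∀ A ⊆ N, MeasurableSet A → μ₀ A ≤ 0)
    (x : ℝ) (hx1 : x < 1) :
    1 - α / (1 - x) <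
      (μ₀.totalVariation
        ((P ∩ {t | x < f₀ t}) ∪ (N ∩ {t | f₀ t < -x}))).toReal := by
  set D := (P ∩ {t | x < f₀ t}) ∪ (N ∩ {t | f₀ t < -x})
  set μp := μ₀.toJordanDecomposition.posPart
  set μn := μ₀.toJordanDecomposition.negPart
  have hμpPc : μp Pᶜ = 0 := measure_mono_null (Set.compl_subset_iff_union.mpr hPN)
    (μ₀.posPart_apply_eq_zero_of_nonpos hNm hN)
  have hμnNc : μn Nᶜ = 0 := measure_mono_null
    (Set.compl_subset_iff_union.mpr (Set.union_comm P N ▸ hPN))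
    (μ₀.negPart_apply_eq_zero_of_nonneg hPm hP)
  have hp : μp.real {t | x < f₀ t} ≤ μp.real D :=
    measureReal_le_of_compl_null hμpPc fun t ht => Or.inl ⟨ht.2, ht.1⟩
  have hn : μn.real {t | f₀ t < -x} ≤ μn.real D :=
    measureReal_le_of_compl_null hμnNc fun t ht => Or.inr ⟨ht.2, ht.1⟩
  have hf₀1 : ∀ t, |f₀ t| ≤ 1 := fun t => hf₀ ▸ f₀.norm_coe_le_norm t
  have hsv := μ₀.svint_le_add_mul f₀.continuous.measurable hf₀1 x
  have hTV : (μ₀.totalVariation D).toReal = μp.real D + μn.real D :=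
    measureReal_add_apply
  have hmass : μ₀.totalVariation.real Set.univ = 1 := by simp [measureReal_def, hnorm]
  rw [hTV, sub_lt_comm, lt_div_iff₀ (sub_pos.mpr hx1)]
  nlinarith

/-- The Hahn-decomposition estimate `|μ₀|(D_x) > 1 - α/(1-x)`. -/
theorem stmt5 (K : Type*) [TopologicalSpace K] [CompactSpace K] [T2Space K]
    [MeasurableSpace K] [BorelSpace K]
    (μ₀ : MeasureTheory.SignedMeasure K)
    (hnorm : μ₀.totalVariation Set.univ = 1)
    (f₀ : C(K, ℝ)) (hf₀ : ‖f₀‖ = 1)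
    (α : ℝ) (hα : 0 < α) (hint : 1 - α < svint μ₀ ⇑f₀)
    (P N : Set K) (hPm : MeasurableSet P) (hNm : MeasurableSet N)
    (hPN : P ∪ N = Set.univ) (hdisj : P ∩ N = ∅)
    (hP : ∀ A ⊆ P, MeasurableSet A → 0 ≤ μ₀ A)
    (hN : ∀ A ⊆ N, MeasurableSet A → μ₀ A ≤ 0)
    (x : ℝ) (hx : 0 < x) (hx1 : x < 1) :
    1 - α / (1 - x) <
      (μ₀.totalVariation
        ((P ∩ {t | x < f₀ t}) ∪ (N ∩ {t | f₀ t < -x}))).toReal :=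
  stmt5_general K μ₀ hnorm f₀ hf₀ α hint P N hPm hNm hPN hP hN x hx1
end

section
/- Let X and Y be Banach spaces and let T_n : X → Y be a sequence of bounded linear operators satisfying ‖T_{n+1} − T_n‖ ≤ rⁿδ for all n ≥ 0, where 0 < r < 1 and δ > 0, and suppose there is h₀ ∈ X with ‖h₀‖ = 1 such that ‖T_n‖ ≤ ‖T_n(h₀)‖ + rⁿδ for all n. Then (T_n) converges in operator norm to an operator T satisfying ‖T − T₀‖ ≤ δ/(1 − r) and ‖T‖ = ‖T(h₀)‖, i.e., T attains its norm at h₀ (provided T ≠ 0). -/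
/-- An iteration lemma: a Cauchy sequence of operators almost attaining their norms
at a common point converges to a norm-attaining operator close to the first term. -/
theorem stmt19 (X : Type*) [NormedAddCommGroup X] [NormedSpace ℝ X]
    (Y : Type*) [NormedAddCommGroup Y] [NormedSpace ℝ Y] [CompleteSpace Y]
    (T : ℕ → X →L[ℝ] Y) (r δ : ℝ) (hr : 0 < r) (hr1 : r < 1) (hδ : 0 < δ)
    (hcauchy : ∀ n, ‖T (n + 1) - T n‖ ≤ r ^ n * δ)
    (h₀ : X) (hh₀ : ‖h₀‖ = 1)
    (hTn : ∀ n, ‖T n‖ ≤ ‖T n h₀‖ + r ^ n * δ) :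
    ∃ Tl : X →L[ℝ] Y, Filter.Tendsto T Filter.atTop (nhds Tl) ∧
      ‖Tl - T 0‖ ≤ δ / (1 - r) ∧ ‖Tl‖ = ‖Tl h₀‖ := by
  have hdist : ∀ n, dist (T n) (T (n + 1)) ≤ δ * r ^ n := by
    intro n
    rw [dist_eq_norm, norm_sub_rev, mul_comm]
    exact hcauchy n
  have hC : CauchySeq T := cauchySeq_of_le_geometric r δ hr1 hdist
  obtain ⟨Tl, hTl⟩ := cauchySeq_tendsto_of_complete hC
  refine ⟨Tl, hTl, ?_, ?_⟩
  · have := dist_le_of_le_geometric_of_tendsto₀ r δ hr1 hdist hTl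
    rwa [dist_comm, dist_eq_norm] at this
  · have h1 : Filter.Tendsto (fun n => ‖T n‖) Filter.atTop (nhds ‖Tl‖) :=
      (continuous_norm.tendsto Tl).comp hTl
    have happ : Filter.Tendsto (fun n => T n h₀) Filter.atTop (nhds (Tl h₀)) :=
      ((ContinuousLinearMap.apply ℝ Y h₀).continuous.tendsto Tl).comp hTl
    have h2 : Filter.Tendsto (fun n => ‖T n h₀‖ + r ^ n * δ) Filter.atTop
        (nhds (‖Tl h₀‖ + 0 * δ)) := by
      exact ((continuous_norm.tendsto _).comp happ).add
        ((tendsto_pow_atTop_nhds_zero_of_lt_one hr.le hr1).mul_const δ)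
    have hle : ‖Tl‖ ≤ ‖Tl h₀‖ := by
      have := le_of_tendsto_of_tendsto' h1 h2 hTn
      simpa using this
    have hge : ‖Tl h₀‖ ≤ ‖Tl‖ := by
      simpa [hh₀] using Tl.le_opNorm h₀
    linarith
end
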